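/- arXiv:1505.06839 — 2 statements merged into one kernel-verified Lean document; each statement's English description precedes it below -/
import Mathlib

section
/- Let c > d > 0 be reals and set q_n = n/(n+c), p_n = n/(n+d). Then q_n → 1, p_n → 1, q_n^n → e^{−c}, p_n^n → e^{−d}, and [n]_{p_n,q_n} = (p_n^n − q_n^n)/(p_n − q_n) → ∞ as n → ∞. -/
open Filter Topology

/-- The (p,q)-integer [n]_{p,q} = (p^n - q^n)/(p - q). -/
noncomputable def pqInt (p q : ℝ) (k : ℕ) : ℝ := (p ^ k - q ^ k) / (p - q)

lemma aux_div_tendsto_one (c : ℝ) :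
    Tendsto (fun n : ℕ => (n : ℝ) / (n + c)) atTop (𝓝 1) :=
  tendsto_natCast_div_add_atTop c

lemma aux_pow_tendsto (c : ℝ) (hc : 0 < c) :
    Tendsto (fun n : ℕ => ((n : ℝ) / (n + c)) ^ n) atTop (𝓝 (Real.exp (-c))) := by
  have h := (Real.tendsto_one_add_div_pow_exp c).inv₀ (Real.exp_ne_zero c)
  rw [Real.exp_neg]
  refine h.congr' ?_
  filter_upwards [eventually_ge_atTop 1] with n hn
  have hn' : (0:ℝ) < n := by exact_mod_cast hn
  rw [← inv_pow]
  congr 1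
  field_simp

lemma aux_main (c d : ℝ) (hd : 0 < d) (hdc : d < c) :
    Tendsto (fun n : ℕ => pqInt ((n : ℝ) / (n + d)) ((n : ℝ) / (n + c)) n) atTop atTop := by
  have hc : 0 < c := hd.trans hdc
  have hcd : 0 < c - d := by linarith
  -- the difference of powers tends to a positive limit
  have hdiff : Tendsto (fun n : ℕ => ((n : ℝ) / (n + d)) ^ n - ((n : ℝ) / (n + c)) ^ n)
      atTop (𝓝 (Real.exp (-d) - Real.exp (-c))) :=
    (aux_pow_tendsto d hd).sub (aux_pow_tendsto c hc)
  have hpos : 0 < Real.exp (-d) - Real.exp (-c) := by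
    have := Real.exp_lt_exp.mpr (show -c < -d by linarith)
    linarith
  -- the reciprocal of (p - q) tends to infinity
  have hrecip : Tendsto (fun n : ℕ => ((n : ℝ) + d) * (n + c) / ((n : ℝ) * (c - d)))
      atTop atTop := by
    have hbase : Tendsto (fun n : ℕ => (n : ℝ) / (c - d)) atTop atTop :=
      tendsto_natCast_atTop_atTop.atTop_div_const hcd
    refine tendsto_atTop_mono' atTop ?_ hbase
    filter_upwards [eventually_ge_atTop 1] with n hn
    have hn' : (1:ℝ) ≤ n := by exact_mod_cast hn
    have h1 : (n : ℝ) * n ≤ ((n : ℝ) + d) * (n + c) := by nlinarith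
    rw [div_le_div_iff₀ (by positivity) (by positivity)]
    nlinarith
  have := Filter.Tendsto.pos_mul_atTop hpos hdiff hrecip
  refine this.congr' ?_
  filter_upwards [eventually_ge_atTop 1] with n hn
  have hn' : (0:ℝ) < n := by exact_mod_cast hn
  have hnd : (0:ℝ) < (n:ℝ) + d := by linarith
  have hnc : (0:ℝ) < (n:ℝ) + c := by linarith
  have hpq : (n : ℝ) / (n + d) - (n : ℝ) / (n + c) = (n * (c - d)) / ((n + d) * (n + c)) := by
    field_simp; ring
  rw [pqInt, hpq, div_div_eq_mul_div]; ring

theorem pq_sequences_limits (c d : ℝ) (hd : 0 < d) (hdc : d < c) :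
    Tendsto (fun n : ℕ => (n : ℝ) / (n + c)) atTop (𝓝 1) ∧
    Tendsto (fun n : ℕ => (n : ℝ) / (n + d)) atTop (𝓝 1) ∧
    Tendsto (fun n : ℕ => ((n : ℝ) / (n + c)) ^ n) atTop (𝓝 (Real.exp (-c))) ∧
    Tendsto (fun n : ℕ => ((n : ℝ) / (n + d)) ^ n) atTop (𝓝 (Real.exp (-d))) ∧
    Tendsto (fun n : ℕ => pqInt ((n : ℝ) / (n + d)) ((n : ℝ) / (n + c)) n) atTop atTop := by
  have hc : 0 < c := hd.trans hdc
  exact ⟨aux_div_tendsto_one c, aux_div_tendsto_one d, aux_pow_tendsto c hc,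
    aux_pow_tendsto d hd, aux_main c d hd hdc⟩
end

section
/- Let c > d > 0, q_n = n/(n+c), p_n = n/(n+d). Then lim_{n→∞} [n]_{p_n,q_n}·(p_n q_n − 2q_n + 1) = e^{−d} − e^{−c}. -/
open Filter Topology

lemma aux_pow_lim (d : ℝ) : Tendsto (fun n : ℕ => ((n : ℝ) / (n + d)) ^ n)
    atTop (𝓝 (Real.exp (-d))) := by
  have h : Tendsto (fun n : ℕ => ((1 + d / n) ^ n)⁻¹) atTop (𝓝 (Real.exp d)⁻¹) :=
    (Real.tendsto_one_add_div_pow_exp d).inv₀ (Real.exp_ne_zero d)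
  rw [← Real.exp_neg] at h
  refine h.congr' ?_
  filter_upwards [eventually_ge_atTop 1] with n hn
  have hn0 : (0 : ℝ) < n := by exact_mod_cast hn
  rw [← inv_pow]
  congr 1
  rw [inv_eq_one_div]
  field_simp

theorem pq_gamma_limit (c d : ℝ) (hd : 0 < d) (hdc : d < c) :
    Tendsto
      (fun n : ℕ =>
        pqInt ((n : ℝ) / (n + d)) ((n : ℝ) / (n + c)) n *
          ((n : ℝ) / (n + d) * ((n : ℝ) / (n + c)) - 2 * ((n : ℝ) / (n + c)) + 1))
      atTop (𝓝 (Real.exp (-d) - Real.exp (-c))) := by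
  have hcd : 0 < c - d := by linarith
  have hfac : Tendsto (fun n : ℕ => 1 + c * d / (n * (c - d))) atTop (𝓝 1) := by
    have h0 : Tendsto (fun n : ℕ => (c * d / (c - d)) / n) atTop (𝓝 0) :=
      tendsto_const_div_atTop_nhds_zero_nat _
    have := h0.const_add 1
    simp only [add_zero] at this
    refine this.congr fun n => ?_
    rw [div_div]
    ring_nf
  have hmain : Tendsto (fun n : ℕ =>
      (((n : ℝ) / (n + d)) ^ n - ((n : ℝ) / (n + c)) ^ n) * (1 + c * d / (n * (c - d))))
      atTop (𝓝 (Real.exp (-d) - Real.exp (-c))) := by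
    have := ((aux_pow_lim d).sub (aux_pow_lim c)).mul hfac
    simpa using this
  refine hmain.congr' ?_
  filter_upwards [eventually_ge_atTop 1] with n hn
  have hn0 : (0 : ℝ) < n := by exact_mod_cast hn
  have hnd : (0 : ℝ) < n + d := by linarith
  have hnc : (0 : ℝ) < n + c := by linarith
  have hlt : (n : ℝ) / (n + c) < (n : ℝ) / (n + d) :=
    div_lt_div_of_pos_left hn0 hnd (by linarith)
  have hpq : (n : ℝ) / (n + d) - (n : ℝ) / (n + c) ≠ 0 := by
    exact sub_ne_zero.mpr (ne_of_gt hlt)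
  rw [pqInt]
  rw [div_mul_eq_mul_div, eq_div_iff hpq]
  field_simp
  ring
end
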